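/- Let M be a connected open n-manifold. Then M × ℝ is one-ended: M × ℝ is noncompact, and for every compact set K ⊆ M × ℝ there is a compact set K′ with K ⊆ K′ such that (M × ℝ) ∖ K′ is connected. -/

import Mathlib

open scoped unitInterval
open CategoryTheory

noncomputable section

/-- `M` is an open `n`-manifold: a noncompact, Hausdorff, second-countable space in which
every point has an open neighborhood homeomorphic to `ℝⁿ`. -/
def IsOpenNManifold (n : ℕ) (M : Type) [TopologicalSpace M] : Prop :=
  T2Space M ∧ SecondCountableTopology M ∧ ¬ CompactSpace M ∧
    ∀ x : M, ∃ U : Set M, IsOpen U ∧ x ∈ U ∧ Nonempty (U ≃ₜ (Fin n → ℝ))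

/-- `X` is finitely dominated: there is a homotopy `H : X × [0,1] → X` starting at the identity
whose time-one image has compact closure. -/
def FinitelyDominated (X : Type) [TopologicalSpace X] : Prop :=
  ∃ H : C(X × I, X), (∀ x, H (x, 0) = x) ∧
    IsCompact (closure (Set.range fun x => H (x, 1)))

/-- `X` has the homotopy type of a finite complex: it is homotopy equivalent to a compact
polyhedron, i.e. a finite union of simplices (convex hulls of finite sets) in some `ℝᴺ`. -/
def FiniteHomotopyType (X : Type) [TopologicalSpace X] : Prop :=
  ∃ (N : ℕ) (S : Finset (Finset (Fin N → ℝ))),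
    Nonempty (ContinuousMap.HomotopyEquiv X
      (⋃ s ∈ S, convexHull ℝ (s : Set (Fin N → ℝ)) : Set (Fin N → ℝ)))

/-- `N` is a clean neighborhood of infinity in `X`: `N` is closed, the closure of its complement
is compact, and its topological frontier is bicollared in `X`. -/
def IsCleanNbhdOfInf {X : Type} [TopologicalSpace X] (N : Set X) : Prop :=
  IsClosed N ∧ IsCompact (closure Nᶜ) ∧
    ∃ (U : Set X) (e : (frontier N × Set.Ioo (-1 : ℝ) 1) ≃ₜ U),
      IsOpen U ∧ frontier N ⊆ U ∧
      (∀ x : frontier N, (e (x, ⟨0, by norm_num⟩) : X) = (x : X)) ∧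
      ((fun z => ((e z : X))) '' {z : frontier N × Set.Ioo (-1 : ℝ) 1 | 0 ≤ (z.2 : ℝ)}
        = U ∩ N)

/-- `X` is one-ended: it is noncompact and every compact set is contained in a compact set
with connected complement. -/
def OneEnded (X : Type) [TopologicalSpace X] : Prop :=
  ¬ CompactSpace X ∧ ∀ K : Set X, IsCompact K →
    ∃ K' : Set X, IsCompact K' ∧ K ⊆ K' ∧ IsConnected K'ᶜ

/-- The neighborhood of infinity `W(N,m) = (N × ℝ) ∪ (M × ((−∞,−m] ∪ [m,∞)))` in `M × ℝ`. -/
def WSet {M : Type} (N : Set M) (m : ℝ) : Set (M × ℝ) :=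
  (N ×ˢ Set.univ) ∪ (Set.univ ×ˢ (Set.Iic (-m) ∪ Set.Ici m))

/-- The subset `W⁺(N,m) = (N × ℝ) ∪ (M × [m,∞))` of `M × ℝ`. -/
def WPlusSet {M : Type} (N : Set M) (m : ℝ) : Set (M × ℝ) :=
  (N ×ˢ Set.univ) ∪ (Set.univ ×ˢ Set.Ici m)

/-- If `Q ⊆ P` and `m ≤ m'` then `W(Q,m') ⊆ W(P,m)`. -/
theorem WSet_mono {M : Type} {P Q : Set M} (h : Q ⊆ P) {m m' : ℝ} (hm : m ≤ m') :
    WSet Q m' ⊆ WSet P m := by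
  rintro ⟨x, t⟩ (⟨hx, -⟩ | ⟨-, ht⟩)
  · exact Or.inl ⟨h hx, Set.mem_univ _⟩
  · refine Or.inr ⟨Set.mem_univ _, ?_⟩
    rcases ht with ht | ht
    · simp only [Set.mem_Iic] at ht ⊢
      exact Or.inl (Set.mem_Iic.mpr (by linarith))
    · simp only [Set.mem_Ici] at ht ⊢
      exact Or.inr (Set.mem_Ici.mpr (by linarith))

/-- The inclusion between subspaces, as a continuous map. -/
def inclCM {X : Type} [TopologicalSpace X] {S T : Set X} (h : S ⊆ T) : C(S, T) :=
  ⟨Set.inclusion h, continuous_inclusion h⟩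

/-- The inclusion of a subspace into the ambient space, as a continuous map. -/
def valCM {X : Type} [TopologicalSpace X] (S : Set X) : C(S, X) :=
  ⟨Subtype.val, continuous_subtype_val⟩

/-- The homomorphism of fundamental groups induced by a continuous map. -/
def indHom {X Y : Type} [TopologicalSpace X] [TopologicalSpace Y]
    (f : C(X, Y)) (x : X) : FundamentalGroup X x →* FundamentalGroup Y (f x) :=
  CategoryTheory.Functor.mapEnd (⟨x⟩ : FundamentalGroupoid X)
    (FundamentalGroupoid.fundamentalGroupoidFunctor.map (X := TopCat.of X) (Y := TopCat.of Y) (TopCat.ofHom f))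

/-- The change-of-basepoint isomorphism `π₁(X,q) ≃* π₁(X,p)` determined by a path `α` from `p`
to `q`; it sends the class of a loop `τ` to the class of `α ∗ τ ∗ α⁻¹`. -/
def basepointChange {X : Type} [TopologicalSpace X] {p q : X} (α : Path p q) :
    FundamentalGroup X q ≃* FundamentalGroup X p :=
  (FundamentalGroup.fundamentalGroupMulEquivOfPath α).symm

/-- The path `α × {0}` in a subset `S` of `M × ℝ` determined by a path `α` in `M`. -/
def pathZeroIn {M : Type} [TopologicalSpace M] {p q : M} (α : Path p q)
    {S : Set (M × ℝ)} (h : ∀ t : I, ((α t : M), (0 : ℝ)) ∈ S) :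
    Path (⟨(p, 0), by simpa using h 0⟩ : S) (⟨(q, 0), by simpa using h 1⟩ : S) where
  toFun t := ⟨(α t, 0), h t⟩
  continuous_toFun := ((α.continuous.prodMk continuous_const)).subtype_mk _
  source' := Subtype.ext (by simp)
  target' := Subtype.ext (by simp)


theorem product_with_R_one_ended (n : ℕ) (M : Type) [TopologicalSpace M]
    (hM : IsOpenNManifold n M) (hMconn : ConnectedSpace M) :
    ¬ CompactSpace (M × ℝ) ∧
      ∀ K : Set (M × ℝ), IsCompact K →
        ∃ K' : Set (M × ℝ), IsCompact K' ∧ K ⊆ K' ∧ IsConnected K'ᶜ := by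
  constructor
  · intro hC
    have hne : Nonempty M := hMconn.toNonempty
    have hsurj : Function.Surjective (Prod.snd : M × ℝ → ℝ) := fun t =>
      ⟨(Classical.arbitrary M, t), rfl⟩
    have : IsCompact (Set.univ : Set ℝ) := by
      have := hC.isCompact_univ.image (continuous_snd : Continuous (Prod.snd : M × ℝ → ℝ))
      rwa [Set.image_univ, Set.range_eq_univ.mpr hsurj] at this
    have : CompactSpace ℝ := isCompact_univ_iff.mp this
    exact (not_compactSpace_iff.mpr inferInstance) this
  · intro K hK
    -- project to M and to ℝ
    set C : Set M := Prod.fst '' K with hCdef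
    have hCcomp : IsCompact C := hK.image continuous_fst
    obtain ⟨m, hm⟩ : ∃ m : ℝ, Prod.snd '' K ⊆ Set.Icc (-m) m := by
      obtain ⟨r, hr⟩ := (hK.image continuous_snd).isBounded.subset_closedBall 0
      exact ⟨r, by simpa [Real.closedBall_eq_Icc] using hr⟩
    refine ⟨C ×ˢ Set.Icc (-m) m, hCcomp.prod isCompact_Icc, ?_, ?_⟩
    · rintro ⟨x, t⟩ hxt
      exact ⟨⟨_, hxt, rfl⟩, hm ⟨_, hxt, rfl⟩⟩
    · -- Cᶜ is nonempty since M is noncompact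
      obtain ⟨x₀, hx₀⟩ : ∃ x : M, x ∉ C := by
        by_contra h
        push_neg at h
        have : C = Set.univ := Set.eq_univ_of_forall h
        exact hM.2.2.1 (isCompact_univ_iff.mp (this ▸ hCcomp))
      set A : Set (M × ℝ) := Set.univ ×ˢ Set.Ioi m with hA
      set B : Set (M × ℝ) := Set.univ ×ˢ Set.Iio (-m) with hB
      have hAp : IsPreconnected A := isPreconnected_univ.prod isPreconnected_Ioi
      have hBp : IsPreconnected B := isPreconnected_univ.prod isPreconnected_Iio
      have hAc : A ⊆ (C ×ˢ Set.Icc (-m) m)ᶜ := by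
        rintro ⟨x, t⟩ ⟨-, ht⟩ ⟨-, h2⟩
        exact absurd h2.2 (not_le.mpr ht)
      have hBc : B ⊆ (C ×ˢ Set.Icc (-m) m)ᶜ := by
        rintro ⟨x, t⟩ ⟨-, ht⟩ ⟨-, h2⟩
        exact absurd h2.1 (not_le.mpr ht)
      -- for each x ∉ C define a connected piece
      have key : ∀ x : M, x ∉ C →
          _root_.IsPreconnected (({x} ×ˢ (Set.univ : Set ℝ)) ∪ A ∪ B) := by
        intro x hx
        have hL : _root_.IsPreconnected ({x} ×ˢ (Set.univ : Set ℝ)) :=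
          isPreconnected_singleton.prod isPreconnected_univ
        have h1 : _root_.IsPreconnected (({x} ×ˢ (Set.univ : Set ℝ)) ∪ A) := by
          apply hL.union (x, m + 1) ?_ ?_ hAp
          · exact ⟨rfl, trivial⟩
          · exact ⟨trivial, Set.mem_Ioi.mpr (show m < m + 1 by linarith)⟩
        apply h1.union (x, -m - 1) ?_ ?_ hBp
        · exact Or.inl ⟨rfl, trivial⟩
        · exact ⟨trivial, Set.mem_Iio.mpr (show -m - 1 < -m by linarith)⟩
      have hcover : (C ×ˢ Set.Icc (-m) m)ᶜ =
          ⋃ x : {x : M // x ∉ C}, (({(x : M)} ×ˢ (Set.univ : Set ℝ)) ∪ A ∪ B) := by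
        ext ⟨x, t⟩
        constructor
        · intro h
          by_cases hx : x ∈ C
          · have ht : t ∉ Set.Icc (-m) m := fun hc => h ⟨hx, hc⟩
            rw [Set.mem_Icc, not_and_or, not_le, not_le] at ht
            refine Set.mem_iUnion.mpr ⟨⟨x₀, hx₀⟩, ?_⟩
            rcases ht with ht | ht
            · exact Or.inr ⟨trivial, ht⟩
            · exact Or.inl (Or.inr ⟨trivial, ht⟩)
          · exact Set.mem_iUnion.mpr ⟨⟨x, hx⟩, Or.inl (Or.inl ⟨rfl, trivial⟩)⟩
        · intro h
          obtain ⟨⟨y, hy⟩, hmem⟩ := Set.mem_iUnion.mp h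
          rintro ⟨hxC, ht1, ht2⟩
          rcases hmem with (⟨hxy, -⟩ | ⟨-, hA'⟩) | ⟨-, hB'⟩
          · rw [Set.mem_singleton_iff.mp hxy] at hxC
            exact hy hxC
          · exact absurd ht2 (not_le.mpr hA')
          · exact absurd ht1 (not_le.mpr hB')
      constructor
      · exact ⟨(x₀, 0), by simp [hx₀]⟩
      · rw [hcover]
        apply isPreconnected_iUnion
        · refine ⟨(x₀, m + 1), Set.mem_iInter.mpr fun x => ?_⟩
          exact Or.inl (Or.inr ⟨trivial, Set.mem_Ioi.mpr (show m < m + 1 by linarith)⟩)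
        · rintro ⟨x, hx⟩
          exact key x hx

end
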